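/- Let M be a finite set, V = {v_1, …, v_n} a family of valuations v_i : 2^M → ℝ, and χ : M → [n] an n-coloring of M with color classes B_1, …, B_n. Let σ be a permutation of [n] maximizing ∑_{i=1}^n v_i(B_{σ(i)}), and set A_i = B_{σ(i)}. Then the allocation A = (A_1, …, A_n) is envy-freeable, and the minimal payments p_i (the maximum weight of a simple path starting at i in the envy graph G_A) satisfy p_i ≤ disc(V, n, χ) for every i. -/

import Mathlib

/-- The total weight of the path visiting the vertices of `l` in order
(the empty or one-vertex path has weight `0`). -/
def pathWeight {n : ℕ} (w : Fin n → Fin n → ℝ) (l : List (Fin n)) : ℝ :=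
  ((l.zip l.tail).map fun q => w q.1 q.2).sum

/-- The discrepancy of the family `v` with respect to the `k`-coloring `χ`:
`max_{ℓ,ℓ'} max_i |v i (χ⁻¹ ℓ) - v i (χ⁻¹ ℓ')|`. -/
noncomputable def discWrt {α : Type*} [Fintype α] [DecidableEq α] {n k : ℕ}
    (v : Fin n → Finset α → ℝ) (χ : α → Fin k) : ℝ :=
  ⨆ ℓ : Fin k, ⨆ ℓ' : Fin k, ⨆ i : Fin n,
    |v i (Finset.univ.filter fun j => χ j = ℓ) -
      v i (Finset.univ.filter fun j => χ j = ℓ')|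

/-! Along any permutation `c`, the envy weights `w i j = v i (A j) - v i (A i)` sum to the welfare
of `σ * c` minus that of `σ`, so every cycle of the envy graph has nonpositive weight. Hence the
maximal simple-path weights `p` satisfy `w i j + p j ≤ p i`, i.e. they are envy-eliminating
payments, and closing the heaviest path from `i` by the arc from its last vertex `k` back to `i`
gives `p i ≤ -w k i = v k (B (σ k)) - v k (B (σ i)) ≤ disc`. -/

theorem Fintype.sum_apply_swap {ι M : Type*} [Fintype ι] [DecidableEq ι] [AddCommGroup M]
    (u : ι → ι → M) (a b : ι) :
    ∑ j, u j (Equiv.swap a b j) = ∑ j, u j j + (u a b - u a a) + (u b a - u b b) := by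
  rcases eq_or_ne a b with rfl | hab
  · simp
  have hdiff : ∑ j, (u j (Equiv.swap a b j) - u j j) = (u a b - u a a) + (u b a - u b b) := by
    rw [Fintype.sum_eq_add a b hab fun j hj => by
      rw [Equiv.swap_apply_of_ne_of_ne hj.1 hj.2, sub_self]]
    simp
  rw [Finset.sum_sub_distrib] at hdiff
  rw [add_assoc, ← hdiff]
  abel

theorem Fintype.sum_apply_swap_mul {ι M : Type*} [Fintype ι] [DecidableEq ι] [AddCommGroup M]
    (w : ι → ι → M) (c : Equiv.Perm ι) (a b : ι) :
    ∑ i, w i ((Equiv.swap a b * c) i) =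
      ∑ i, w i (c i) + (w (c.symm a) b - w (c.symm a) a) + (w (c.symm b) a - w (c.symm b) b) := by
  have reindex (f : ι → ι) : ∑ i, w i (f (c i)) = ∑ j, w (c.symm j) (f j) := by
    simpa using Equiv.sum_comp c fun j => w (c.symm j) (f j)
  have hid := reindex id
  simp only [id] at hid
  simp only [Equiv.Perm.mul_apply, reindex (Equiv.swap a b), hid]
  exact Fintype.sum_apply_swap (fun j => w (c.symm j)) a b

section PathWeight

variable {n : ℕ} (w : Fin n → Fin n → ℝ)

@[simp]
theorem pathWeight_singleton (a : Fin n) : pathWeight w [a] = 0 := by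
  simp [pathWeight]

@[simp]
theorem pathWeight_cons_cons (a b : Fin n) (l : List (Fin n)) :
    pathWeight w (a :: b :: l) = w a b + pathWeight w (b :: l) := by
  simp [pathWeight]

theorem pathWeight_cons_append_cons (a : Fin n) (s : List (Fin n)) (i : Fin n)
    (t : List (Fin n)) :
    pathWeight w (a :: s ++ i :: t) =
      pathWeight w (a :: s) + w ((a :: s).getLast (List.cons_ne_nil a s)) i +
        pathWeight w (i :: t) := by
  induction s generalizing a with
  | nil => simp
  | cons b s ih =>
    simp only [List.cons_append] at ih ⊢
    rw [pathWeight_cons_cons w a b (s ++ i :: t), ih, pathWeight_cons_cons, List.getLast_cons_cons]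
    ring

theorem sum_apply_formPerm (hw : ∀ i, w i i = 0) :
    ∀ (l : List (Fin n)) (hne : l ≠ []), l.Nodup →
      ∑ i, w i (l.formPerm i) = pathWeight w l + w (l.getLast hne) (l.head hne)
  | [], hne, _ => absurd rfl hne
  | [a], _, _ => by simp [hw]
  | a :: b :: t, _, hl => by
    obtain ⟨ha, hnd⟩ := List.nodup_cons.mp hl
    set c := (b :: t).formPerm
    have hca : c.symm a = a := by
      rw [Equiv.symm_apply_eq, List.formPerm_apply_of_notMem ha]
    have hcb : c.symm b = (b :: t).getLast (List.cons_ne_nil b t) := by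
      rw [Equiv.symm_apply_eq, List.formPerm_apply_getLast]
    rw [List.formPerm_cons_cons, Fintype.sum_apply_swap_mul, hca, hcb,
      sum_apply_formPerm hw (b :: t) (List.cons_ne_nil b t) hnd, pathWeight_cons_cons,
      List.getLast_cons (List.cons_ne_nil b t), hw, List.head_cons, List.head_cons]
    ring

variable {w}

theorem pathWeight_add_closing_nonpos (hw : ∀ i, w i i = 0)
    (hcyc : ∀ c : Equiv.Perm (Fin n), ∑ i, w i (c i) ≤ 0)
    (l : List (Fin n)) (hne : l ≠ []) (hl : l.Nodup) :
    pathWeight w l + w (l.getLast hne) (l.head hne) ≤ 0 :=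
  sum_apply_formPerm w hw l hne hl ▸ hcyc l.formPerm

variable (w)

def simplePathWeights (i : Fin n) : Set ℝ :=
  {x | ∃ l : List (Fin n), l.Nodup ∧ l.head? = some i ∧ pathWeight w l = x}

theorem zero_mem_simplePathWeights (i : Fin n) : (0 : ℝ) ∈ simplePathWeights w i :=
  ⟨[i], List.nodup_singleton i, rfl, pathWeight_singleton w i⟩

theorem simplePathWeights_finite (i : Fin n) : (simplePathWeights w i).Finite := by
  refine ((List.finite_length_le (Fin n) n).image (pathWeight w)).subset ?_
  rintro x ⟨l, hl, -, rfl⟩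
  exact ⟨l, by simpa using hl.length_le_card, rfl⟩

theorem exists_isGreatest_simplePathWeights (i : Fin n) :
    ∃ x, IsGreatest (simplePathWeights w i) x :=
  (simplePathWeights_finite w i).isCompact.exists_isGreatest ⟨0, zero_mem_simplePathWeights w i⟩

variable {w}

theorem exists_add_le_zero_of_isGreatest_simplePathWeights (hw : ∀ i, w i i = 0)
    (hcyc : ∀ c : Equiv.Perm (Fin n), ∑ i, w i (c i) ≤ 0) {i : Fin n} {x : ℝ}
    (hx : IsGreatest (simplePathWeights w i) x) : ∃ k, x + w k i ≤ 0 := by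
  obtain ⟨_ | ⟨a, l⟩, hl, hhead, rfl⟩ := hx.1
  · simp at hhead
  obtain rfl : a = i := by simpa using hhead
  exact ⟨_, pathWeight_add_closing_nonpos hw hcyc (a :: l) (List.cons_ne_nil a l) hl⟩

/-- If `i` lies on the heaviest path from `j`, the part before `i` closes into a cycle through `i`;
otherwise prepending `i` gives a simple path from `i`. -/
theorem add_le_of_isGreatest_simplePathWeights (hw : ∀ i, w i i = 0)
    (hcyc : ∀ c : Equiv.Perm (Fin n), ∑ i, w i (c i) ≤ 0) {p : Fin n → ℝ}
    (hp : ∀ i, IsGreatest (simplePathWeights w i) (p i)) (i j : Fin n) :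
    w i j + p j ≤ p i := by
  obtain ⟨_ | ⟨a, l⟩, hl, hhead, hpj⟩ := (hp j).1
  · simp at hhead
  obtain rfl : a = j := by simpa using hhead
  by_cases hi : i ∈ a :: l
  swap
  · exact (hp i).2
      ⟨i :: a :: l, List.nodup_cons.mpr ⟨hi, hl⟩, rfl, by rw [pathWeight_cons_cons, hpj]⟩
  obtain ⟨_ | ⟨b, s⟩, t, hsplit⟩ := List.append_of_mem hi
  · obtain ⟨rfl, -⟩ : a = i ∧ l = t := by simpa using hsplit
    rw [hw, zero_add]
  simp only [List.cons_append, List.cons.injEq] at hsplit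
  obtain ⟨rfl, rfl⟩ := hsplit
  rw [← List.cons_append, List.nodup_append] at hl
  obtain ⟨hs, ht, hdisj⟩ := hl
  have hi_notMem : i ∉ a :: s := fun h => hdisj _ h _ List.mem_cons_self rfl
  have hcycle := pathWeight_add_closing_nonpos hw hcyc (i :: a :: s) (List.cons_ne_nil _ _)
    (List.nodup_cons.mpr ⟨hi_notMem, hs⟩)
  rw [pathWeight_cons_cons, List.getLast_cons (List.cons_ne_nil a s), List.head_cons] at hcycle
  have htail := (hp i).2 ⟨i :: t, ht, rfl, rfl⟩
  rw [← List.cons_append, pathWeight_cons_append_cons] at hpj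
  linarith

end PathWeight

theorem sub_le_discWrt {α : Type*} [Fintype α] [DecidableEq α] {n k : ℕ}
    (v : Fin n → Finset α → ℝ) (χ : α → Fin k) (i : Fin n) (ℓ ℓ' : Fin k) :
    v i (Finset.univ.filter fun j => χ j = ℓ) - v i (Finset.univ.filter fun j => χ j = ℓ') ≤
      discWrt v χ :=
  (le_abs_self _).trans <| le_ciSup_of_le (Finite.bddAbove_range _) ℓ <|
    le_ciSup_of_le (Finite.bddAbove_range _) ℓ' <|
      le_ciSup (f := fun i => |v i _ - v i _|) (Finite.bddAbove_range _) i

/-- **Welfare-maximizing reassignment of a low-discrepancy partition.**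
Let `χ` be an `n`-coloring of the items with color classes `B ℓ = χ⁻¹ ℓ`, and let
`σ` be a permutation maximizing `∑ i, v i (B (σ i))`; set `A i = B (σ i)`. Then
the allocation `A` is envy-freeable, and the minimal payments `p i`—the maximum
weight of a simple path starting at `i` in the envy graph `G_A`—satisfy
`p i ≤ disc(V, n, χ)` for every agent `i`. -/
theorem welfare_max_reassignment_payments_le_disc
    {α : Type*} [Fintype α] [DecidableEq α] {n : ℕ}
    (v : Fin n → Finset α → ℝ) (χ : α → Fin n)
    (B : Fin n → Finset α)
    (hB : ∀ ℓ : Fin n, B ℓ = Finset.univ.filter fun j => χ j = ℓ)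
    (σ : Equiv.Perm (Fin n))
    (hσ : ∀ τ : Equiv.Perm (Fin n), ∑ i, v i (B (τ i)) ≤ ∑ i, v i (B (σ i)))
    (A : Fin n → Finset α) (hA : ∀ i, A i = B (σ i)) :
    (∃ p : Fin n → ℝ, (∀ i, 0 ≤ p i) ∧
        ∀ i j : Fin n, v i (A j) + p j ≤ v i (A i) + p i) ∧
    (∀ p : Fin n → ℝ,
      (∀ i : Fin n,
        IsGreatest {x : ℝ | ∃ l : List (Fin n), l.Nodup ∧ l.head? = some i ∧
          pathWeight (fun i j => v i (A j) - v i (A i)) l = x} (p i)) →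
      ∀ i : Fin n, p i ≤ discWrt v χ) := by
  set w : Fin n → Fin n → ℝ := fun i j => v i (A j) - v i (A i)
  have hw : ∀ i, w i i = 0 := fun i => sub_self _
  have hcyc (c : Equiv.Perm (Fin n)) : ∑ i, w i (c i) ≤ 0 := by
    have hwelfare := hσ (σ * c)
    simp only [w, Finset.sum_sub_distrib, hA, Equiv.Perm.mul_apply] at hwelfare ⊢
    linarith
  refine ⟨?_, fun p hp i => ?_⟩
  · choose p hp using exists_isGreatest_simplePathWeights w
    refine ⟨p, fun i => (hp i).2 (zero_mem_simplePathWeights w i), fun i j => ?_⟩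
    have hpot := add_le_of_isGreatest_simplePathWeights hw hcyc hp i j
    simp only [w] at hpot
    linarith
  · obtain ⟨k, hk⟩ := exists_add_le_zero_of_isGreatest_simplePathWeights hw hcyc (hp i)
    have hdisc := sub_le_discWrt v χ k (σ k) (σ i)
    simp only [w, hA, hB] at hk hdisc
    linarith
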